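/- arXiv:2510.12675 — 4 statements merged into one kernel-verified Lean document; each statement's English description precedes it below -/
import Mathlib

section
/- There is a bijection between loops of length n based at * of weight 1 in a fair and balanced δ-graph Γ, and loops of length n based at [1,*] in its tracial cover Γ_tr. -/
/-- A fair and balanced `δ`-graph: a locally finite directed multigraph with positive
edge weights, an involution on edges reversing source and target with
`w e * w (bar e) = 1`, and outgoing weight sum `δ` at every vertex. -/
structure FBGraph (δ : ℝ) where
  V : Type
  E : Type
  s : E → V
  t : E → V
  w : E → ℝ
  w_pos : ∀ e, 0 < w e
  bar : E → E
  bar_bar : ∀ e, bar (bar e) = e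
  s_bar : ∀ e, s (bar e) = t e
  t_bar : ∀ e, t (bar e) = s e
  w_bar : ∀ e, w e * w (bar e) = 1
  out_finite : ∀ x : V, {e : E | s e = x}.Finite
  sum_w : ∀ x : V, ∑ e ∈ (out_finite x).toFinset, w e = δ

/-- Paths in a directed graph given by source and target maps. -/
inductive IsPathOn {V E : Type} (s t : E → V) : V → V → List E → Prop
  | nil (v : V) : IsPathOn s t v v []
  | cons {a c : V} {e : E} {l : List E} :
      s e = a → IsPathOn s t (t e) c l → IsPathOn s t a c (e :: l)

/-- The weight of a path: the product of its edge weights. -/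
def pathWeight {E : Type} (w : E → ℝ) (l : List E) : ℝ := (l.map w).prod

theorem pathWeight_append {E : Type} (w : E → ℝ) (l₁ l₂ : List E) :
    pathWeight w (l₁ ++ l₂) = pathWeight w l₁ * pathWeight w l₂ := by
  simp [pathWeight]

theorem IsPathOn.append {V E : Type} {s t : E → V} {a b c : V} {l₁ l₂ : List E}
    (h₁ : IsPathOn s t a b l₁) (h₂ : IsPathOn s t b c l₂) :
    IsPathOn s t a c (l₁ ++ l₂) := by
  induction h₁ with
  | nil v => simpa using h₂
  | cons hs _ ih => exact IsPathOn.cons hs (ih h₂)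

theorem IsPathOn.single {V E : Type} {s t : E → V} (e : E) :
    IsPathOn s t (s e) (t e) [e] := IsPathOn.cons rfl (IsPathOn.nil _)

/-- The set of weights of loops based at `x`. -/
def loopWeights {δ : ℝ} (G : FBGraph δ) (x : G.V) : Set ℝ :=
  {r | ∃ l : List G.E, IsPathOn G.s G.t x x l ∧ pathWeight G.w l = r}

/-- Vertices of the tracial cover `Γ_tr`: pairs `[λ, v]` such that there is a path
from `x` to `v` of weight `λ`. -/
abbrev TrV {δ : ℝ} (G : FBGraph δ) (x : G.V) : Type :=
  {p : ℝ × G.V // ∃ l : List G.E, IsPathOn G.s G.t x p.2 l ∧ pathWeight G.w l = p.1}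

/-- Edges of the tracial cover: an edge out of `[λ, v]` for each edge `e` of `Γ`
with source `v`. -/
abbrev TrE {δ : ℝ} (G : FBGraph δ) (x : G.V) : Type :=
  {p : (ℝ × G.V) × G.E //
    (∃ l : List G.E, IsPathOn G.s G.t x p.1.2 l ∧ pathWeight G.w l = p.1.1) ∧
      G.s p.2 = p.1.2}

def trS {δ : ℝ} (G : FBGraph δ) (x : G.V) (e : TrE G x) : TrV G x := ⟨e.val.1, e.prop.1⟩

def trW {δ : ℝ} (G : FBGraph δ) (x : G.V) (e : TrE G x) : ℝ := G.w e.val.2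

def trT {δ : ℝ} (G : FBGraph δ) (x : G.V) (e : TrE G x) : TrV G x :=
  ⟨(e.val.1.1 * G.w e.val.2, G.t e.val.2), by
    obtain ⟨⟨l, hl, hw⟩, hs⟩ := e.prop
    refine ⟨l ++ [e.val.2], ?_, ?_⟩
    · exact hl.append (hs ▸ IsPathOn.single e.val.2)
    · rw [pathWeight_append, hw]; simp [pathWeight]⟩

/-- The distinguished vertex `[1, x]` of the tracial cover. -/
def trBase {δ : ℝ} (G : FBGraph δ) (x : G.V) : TrV G x :=
  ⟨(1, x), ⟨[], IsPathOn.nil x, by simp [pathWeight]⟩⟩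

/-!
The projection `[λ, v] ↦ v` makes the tracial cover a covering of `Γ`: an edge of `Γ_tr` is
determined by its source and the edge of `Γ` below it, so every path of `Γ` out of `v` lifts
uniquely to a path out of any `[λ, v]`, and the lift ends at `[λ · weight, endpoint]`. Starting
at `[1, *]`, the lift of a loop at `*` therefore closes up exactly when the loop has weight `1`.
-/

namespace IsPathOn

variable {V E : Type} {s t : E → V} {a c : V} {e : E} {l : List E}

theorem eq_of_nil (h : IsPathOn s t a c []) : a = c := by
  cases h; rfl

theorem head_src (h : IsPathOn s t a c (e :: l)) : s e = a := by
  cases h; assumption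

theorem tail (h : IsPathOn s t a c (e :: l)) : IsPathOn s t (t e) c l := by
  cases h; assumption

end IsPathOn

section TracialCover

variable {δ : ℝ} {G : FBGraph δ} {x : G.V}

def trProj (L : List (TrE G x)) : List G.E := L.map (·.val.2)

def trLift : (p : TrV G x) → (l : List G.E) → {c : G.V} →
    IsPathOn G.s G.t p.val.2 c l → List (TrE G x)
  | _, [], _, _ => []
  | p, e :: l, _, h =>
    let e' : TrE G x := ⟨(p.val, e), p.prop, h.head_src⟩
    e' :: trLift (trT G x e') l h.tail

theorem trProj_trLift (p : TrV G x) (l : List G.E) {c : G.V}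
    (h : IsPathOn G.s G.t p.val.2 c l) : trProj (trLift p l h) = l := by
  induction l generalizing p with
  | nil => rfl
  | cons e l ih => exact congrArg (e :: ·) (ih _ h.tail)

theorem length_trLift (p : TrV G x) (l : List G.E) {c : G.V}
    (h : IsPathOn G.s G.t p.val.2 c l) : (trLift p l h).length = l.length := by
  simpa [trProj] using congrArg List.length (trProj_trLift p l h)

theorem isPathOn_trLift (p q : TrV G x) (l : List G.E) {c : G.V}
    (h : IsPathOn G.s G.t p.val.2 c l) (hq : q.val = (p.val.1 * pathWeight G.w l, c)) :
    IsPathOn (trS G x) (trT G x) p q (trLift p l h) := by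
  induction l generalizing p with
  | nil =>
    obtain rfl : p = q := Subtype.ext (by rw [hq, ← h.eq_of_nil]; simp [pathWeight])
    exact .nil p
  | cons e l ih =>
    refine .cons rfl (ih _ h.tail ?_)
    simp [hq, trT, pathWeight, mul_assoc]

theorem isPathOn_trProj {p q : TrV G x} {L : List (TrE G x)}
    (hL : IsPathOn (trS G x) (trT G x) p q L) :
    IsPathOn G.s G.t p.val.2 q.val.2 (trProj L) := by
  induction hL with
  | nil => exact .nil _
  | @cons _ _ e _ hs _ ih => exact .cons (e.prop.2.trans (congrArg (·.val.2) hs)) ih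

theorem pathWeight_trProj {p q : TrV G x} {L : List (TrE G x)}
    (hL : IsPathOn (trS G x) (trT G x) p q L) :
    q.val.1 = p.val.1 * pathWeight G.w (trProj L) := by
  induction hL with
  | nil => simp [trProj, pathWeight]
  | cons hs _ ih => simp [ih, ← hs, trT, trS, trProj, pathWeight, mul_assoc]

theorem trLift_trProj {p q : TrV G x} {L : List (TrE G x)}
    (hL : IsPathOn (trS G x) (trT G x) p q L) (h : IsPathOn G.s G.t p.val.2 q.val.2 (trProj L)) :
    trLift p (trProj L) h = L := by
  induction hL with
  | nil => rfl
  | @cons _ _ e _ hs _ ih =>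
    subst hs
    -- the edge `trLift` rebuilds over `trS G x e` is `e` itself, by structure eta
    exact congrArg (e :: ·) (ih h.tail)

end TracialCover

/-- There is a bijection between loops of length `n` based at `*` of weight `1` in a
fair and balanced `δ`-graph `Γ`, and loops of length `n` based at `[1, *]` in its
tracial cover `Γ_tr`. -/
theorem loops_bijection {δ : ℝ} (G : FBGraph δ) (x : G.V) (n : ℕ) :
    Nonempty
      ({l : List G.E //
          IsPathOn G.s G.t x x l ∧ pathWeight G.w l = 1 ∧ l.length = n} ≃
        {L : List (TrE G x) //
          IsPathOn (trS G x) (trT G x) (trBase G x) (trBase G x) L ∧ L.length = n}) := by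
  refine ⟨{
    toFun := fun l => ⟨trLift (trBase G x) l.val l.prop.1, ?_, ?_⟩
    invFun := fun L => ⟨trProj L.val, isPathOn_trProj L.prop.1, ?_, ?_⟩
    left_inv := fun l => Subtype.ext (trProj_trLift _ _ _)
    right_inv := fun L => Subtype.ext (trLift_trProj L.prop.1 _) }⟩
  · exact isPathOn_trLift _ _ _ _ (by simp [trBase, l.prop.2.1])
  · exact (length_trLift _ _ _).trans l.prop.2.2
  · simpa [trBase] using (pathWeight_trProj L.prop.1).symm
  · simpa [trProj] using L.prop.2
end

section
/- Let Γ be a tracial connected fair and balanced δ-graph with vertex weighting w_V, and let H be a subgroup of ℝ₊ˣ acting on V(Γ) by graph automorphisms preserving the edge structure and edge weights such that w_V(h·v) = h·w_V(v) for all h ∈ H, v ∈ V(Γ). Then the quotient graph Γ^H, whose vertices are H-orbits with one edge [x] → [y] for each edge x → y' (y' ∈ [y]) from a fixed representative x, is a well-defined fair and balanced δ-graph. -/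
/-!
Since `wV (h • v) = h * wV v` with `wV v ≠ 0`, no `h ≠ 1` fixes a vertex: the action on vertices
is free. Hence two distinct edges out of the same vertex `v` never lie in one orbit, so the
orbit map is a bijection from the out-star of `v` onto the out-star of `[v]`. The weights are
constant on orbits, so the outgoing weight sum at `[v]` is the one at `v`, namely `δ`.
-/

open MulAction

section OrbitQuotient

variable {H α β : Type*} [Group H] [MulAction H α] [MulAction H β]

theorem orbitRel_mk_eq_mk_iff {a a' : α} :
    Quotient.mk (orbitRel H α) a = Quotient.mk _ a' ↔ ∃ h : H, h • a = a' := by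
  rw [Quotient.eq, orbitRel_apply, mem_orbit_symm]
  rfl

def orbitMap (f : α → β) (hf : ∀ (h : H) a, f (h • a) = h • f a) :
    orbitRel.Quotient H α → orbitRel.Quotient H β :=
  Quotient.map f fun _ a' ⟨h, ha⟩ => ⟨h, by rw [← ha, hf]⟩

variable {f : α → β}

theorem injOn_orbitRel_mk_preimage [IsCancelSMul H β] (hf : ∀ (h : H) a, f (h • a) = h • f a)
    (b : β) : Set.InjOn (Quotient.mk (orbitRel H α)) (f ⁻¹' {b}) := by
  intro a ha a' ha' hq
  obtain ⟨h, rfl⟩ := orbitRel_mk_eq_mk_iff.mp hq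
  rw [Set.mem_preimage, Set.mem_singleton_iff] at ha ha'
  have hfix : h • f a = f a := by rw [← hf, ha', ha]
  rw [IsCancelSMul.eq_one_of_smul hfix, one_smul]

variable {hf : ∀ (h : H) a, f (h • a) = h • f a}

@[simp]
theorem orbitMap_mk (a : α) :
    orbitMap f hf (Quotient.mk _ a) = Quotient.mk _ (f a) := rfl

theorem preimage_orbitMap_mk (b : β) :
    orbitMap f hf ⁻¹' {Quotient.mk _ b} = Quotient.mk (orbitRel H α) '' (f ⁻¹' {b}) := by
  ext q
  obtain ⟨a, rfl⟩ := Quotient.mk_surjective q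
  simp only [Set.mem_preimage, Set.mem_singleton_iff, orbitMap_mk, orbitRel_mk_eq_mk_iff,
    Set.mem_image]
  constructor
  · rintro ⟨h, hab⟩
    exact ⟨h • a, by rw [hf, hab], h⁻¹, inv_smul_smul h a⟩
  · rintro ⟨a', ha', h, rfl⟩
    exact ⟨h⁻¹, by rw [hf, inv_smul_smul, ha']⟩

end OrbitQuotient

theorem isCancelSMul_of_smul_weight {α : Type*} {H : Subgroup ℝˣ} [MulAction H α]
    (wV : α → ℝ) (hw : ∀ v, wV v ≠ 0) (hsmul : ∀ (h : H) v, wV (h • v) = ((h : ℝˣ) : ℝ) * wV v) :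
    IsCancelSMul H α :=
  isCancelSMul_iff_eq_one_of_smul_eq.mpr fun h v hv => by
    have h_one : ((h : ℝˣ) : ℝ) = 1 :=
      mul_right_cancel₀ (hw v) (by rw [one_mul, ← hsmul, hv])
    exact Subtype.ext (Units.ext h_one)

namespace FBGraph

variable {δ : ℝ} (G : FBGraph δ) (H : Type*) [Group H] [MulAction H G.V] [MulAction H G.E]

structure IsGraphAction : Prop where
  s_smul : ∀ (h : H) e, G.s (h • e) = h • G.s e
  t_smul : ∀ (h : H) e, G.t (h • e) = h • G.t e
  w_smul : ∀ (h : H) e, G.w (h • e) = G.w e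
  bar_smul : ∀ (h : H) e, G.bar (h • e) = h • G.bar e

variable {G H}

theorem IsGraphAction.w_eq_of_orbitRel (hA : G.IsGraphAction H) {e e' : G.E}
    (he : orbitRel H G.E e e') : G.w e = G.w e' := by
  obtain ⟨h, rfl⟩ := he
  exact hA.w_smul h e'

theorem IsGraphAction.out_finite (hA : G.IsGraphAction H) (v : G.V) :
    (orbitMap G.s hA.s_smul ⁻¹' {Quotient.mk _ v}).Finite := by
  rw [preimage_orbitMap_mk]
  exact (G.out_finite v).image _

theorem IsGraphAction.sum_w [IsCancelSMul H G.V] (hA : G.IsGraphAction H) (v : G.V) :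
    ∑ q ∈ (hA.out_finite v).toFinset, Quotient.lift G.w (fun _ _ => hA.w_eq_of_orbitRel) q
      = δ := by
  classical
  have hstar : (hA.out_finite v).toFinset
      = (G.out_finite v).toFinset.image (Quotient.mk (orbitRel H G.E)) := by
    apply Finset.coe_injective
    simp only [Set.Finite.coe_toFinset, Finset.coe_image, preimage_orbitMap_mk]
    rfl
  rw [hstar, Finset.sum_image fun e he e' he' => injOn_orbitRel_mk_preimage hA.s_smul v
    (by simpa using he) (by simpa using he')]
  exact G.sum_w v

/-- The quotient graph `Γ^H`. -/
def quotient [IsCancelSMul H G.V] (hA : G.IsGraphAction H) : FBGraph δ where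
  V := orbitRel.Quotient H G.V
  E := orbitRel.Quotient H G.E
  s := orbitMap G.s hA.s_smul
  t := orbitMap G.t hA.t_smul
  w := Quotient.lift G.w fun _ _ => hA.w_eq_of_orbitRel
  w_pos q := Quotient.inductionOn q G.w_pos
  bar := orbitMap G.bar hA.bar_smul
  bar_bar q := Quotient.inductionOn q fun e => congrArg (Quotient.mk _) (G.bar_bar e)
  s_bar q := Quotient.inductionOn q fun e => congrArg (Quotient.mk _) (G.s_bar e)
  t_bar q := Quotient.inductionOn q fun e => congrArg (Quotient.mk _) (G.t_bar e)
  w_bar q := Quotient.inductionOn q G.w_bar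
  out_finite q := Quotient.inductionOn q hA.out_finite
  sum_w q := Quotient.inductionOn q hA.sum_w

end FBGraph

theorem quotient_graph_fair_balanced_general {δ : ℝ} (G : FBGraph δ)
    (wV : G.V → ℝ) (hwpos : ∀ v, 0 < wV v)
    (H : Subgroup ℝˣ)
    (act : H → G.V → G.V) (actE : H → G.E → G.E)
    (act_one : ∀ v, act 1 v = v)
    (act_mul : ∀ h₁ h₂ v, act (h₁ * h₂) v = act h₁ (act h₂ v))
    (actE_one : ∀ e, actE 1 e = e)
    (actE_mul : ∀ h₁ h₂ e, actE (h₁ * h₂) e = actE h₁ (actE h₂ e))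
    (act_s : ∀ h e, G.s (actE h e) = act h (G.s e))
    (act_t : ∀ h e, G.t (actE h e) = act h (G.t e))
    (act_w : ∀ h e, G.w (actE h e) = G.w e)
    (act_bar : ∀ h e, G.bar (actE h e) = actE h (G.bar e))
    (act_wV : ∀ h v, wV (act h v) = ((h : ℝˣ) : ℝ) * wV v) :
    ∃ (Q : FBGraph δ) (πV : G.V → Q.V) (πE : G.E → Q.E),
      Function.Surjective πV ∧ Function.Surjective πE ∧
      (∀ e, Q.s (πE e) = πV (G.s e)) ∧
      (∀ e, Q.t (πE e) = πV (G.t e)) ∧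
      (∀ e, Q.w (πE e) = G.w e) ∧
      (∀ v v', πV v = πV v' ↔ ∃ h : H, act h v = v') ∧
      (∀ e e', πE e = πE e' ↔ ∃ h : H, actE h e = e') := by
  let _ : MulAction H G.V := { smul := act, one_smul := act_one, mul_smul := act_mul }
  let _ : MulAction H G.E := { smul := actE, one_smul := actE_one, mul_smul := actE_mul }
  have : IsCancelSMul H G.V := isCancelSMul_of_smul_weight wV (fun v => (hwpos v).ne') act_wV
  have hA : G.IsGraphAction H := ⟨act_s, act_t, act_w, act_bar⟩
  exact ⟨G.quotient hA, Quotient.mk _, Quotient.mk _, Quotient.mk_surjective,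
    Quotient.mk_surjective, fun _ => rfl, fun _ => rfl, fun _ => rfl,
    fun _ _ => orbitRel_mk_eq_mk_iff, fun _ _ => orbitRel_mk_eq_mk_iff⟩

/-- Let `Γ` be a tracial connected fair and balanced `δ`-graph with vertex weighting
`wV`, and let `H ≤ ℝ₊ˣ` act on `Γ` by weight-preserving graph automorphisms with
`wV (h · v) = h * wV v`. Then the quotient graph `Γ^H` is a well-defined fair and
balanced `δ`-graph: there is a fair and balanced `δ`-graph `Q` together with
surjections on vertices and edges identifying exactly the `H`-orbits, compatible
with sources, targets and weights. -/
theorem quotient_graph_fair_balanced {δ : ℝ} (G : FBGraph δ) (x : G.V)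
    (wV : G.V → ℝ) (hwpos : ∀ v, 0 < wV v) (hwx : wV x = 1)
    (hwV : ∀ e : G.E, G.w e = wV (G.t e) / wV (G.s e))
    (hconn : ∀ v : G.V, ∃ l : List G.E, IsPathOn G.s G.t x v l)
    (H : Subgroup ℝˣ) (hHpos : ∀ h : H, (0 : ℝ) < ((h : ℝˣ) : ℝ))
    (act : H → G.V → G.V) (actE : H → G.E → G.E)
    (act_one : ∀ v, act 1 v = v)
    (act_mul : ∀ h₁ h₂ v, act (h₁ * h₂) v = act h₁ (act h₂ v))
    (actE_one : ∀ e, actE 1 e = e)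
    (actE_mul : ∀ h₁ h₂ e, actE (h₁ * h₂) e = actE h₁ (actE h₂ e))
    (act_s : ∀ h e, G.s (actE h e) = act h (G.s e))
    (act_t : ∀ h e, G.t (actE h e) = act h (G.t e))
    (act_w : ∀ h e, G.w (actE h e) = G.w e)
    (act_bar : ∀ h e, G.bar (actE h e) = actE h (G.bar e))
    (act_wV : ∀ h v, wV (act h v) = ((h : ℝˣ) : ℝ) * wV v) :
    ∃ (Q : FBGraph δ) (πV : G.V → Q.V) (πE : G.E → Q.E),
      Function.Surjective πV ∧ Function.Surjective πE ∧
      (∀ e, Q.s (πE e) = πV (G.s e)) ∧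
      (∀ e, Q.t (πE e) = πV (G.t e)) ∧
      (∀ e, Q.w (πE e) = G.w e) ∧
      (∀ v v', πV v = πV v' ↔ ∃ h : H, act h v = v') ∧
      (∀ e e', πE e = πE e' ↔ ∃ h : H, actE h e = e') :=
  quotient_graph_fair_balanced_general G wV hwpos H act actE act_one act_mul actE_one actE_mul act_s
    act_t act_w act_bar act_wV
end

section
/- If H ≤ ℝ₊ˣ acts nontrivially on a tracial connected fair and balanced δ-graph Γ (with w_V(h·v) = h·w_V(v)) such that some vertex x has two distinct H-translates y₂ = h·y₁ both adjacent to x, then the quotient graph Γ^H is not tracial: it has two edges from [x] to [y₁] with distinct weights w_V(y₁)/w_V(x) and h·w_V(y₁)/w_V(x). -/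
/-! Two edges with the same source and target but different weights `a ≠ b` give the loop
`e₁ · bar e₂` of weight `a / b ≠ 1`. In `Γ^H` the edges out of `[x₀]` coming from `e₁` and `e₂`
have the same target `[t e₁] = [h · t e₁]`, while `w_V (h · v) = h · w_V v` makes their weights
differ by the factor `h ≠ 1`. -/

namespace FBGraph

variable {δ : ℝ} (G : FBGraph δ)

theorem w_bar_eq_inv (e : G.E) : G.w (G.bar e) = (G.w e)⁻¹ :=
  eq_inv_of_mul_eq_one_right (G.w_bar e)

theorem exists_loop_weight_ne_one_of_parallel {e₁ e₂ : G.E} (hs : G.s e₁ = G.s e₂)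
    (ht : G.t e₁ = G.t e₂) (hw : G.w e₁ ≠ G.w e₂) :
    ∃ l : List G.E, IsPathOn G.s G.t (G.s e₁) (G.s e₁) l ∧ pathWeight G.w l ≠ 1 := by
  have hback : IsPathOn G.s G.t (G.t e₁) (G.s e₁) [G.bar e₂] := by
    simpa only [G.s_bar, G.t_bar, ht, hs] using IsPathOn.single (s := G.s) (t := G.t) (G.bar e₂)
  refine ⟨[e₁, G.bar e₂], (IsPathOn.single e₁).append hback, ?_⟩
  simp only [pathWeight, List.map_cons, List.map_nil, List.prod_cons, List.prod_nil, mul_one,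
    w_bar_eq_inv]
  rwa [Ne, mul_inv_eq_one₀ (G.w_pos e₂).ne']

end FBGraph

theorem quotient_graph_not_tracial_general {δ : ℝ} (G : FBGraph δ)
    (wV : G.V → ℝ) (hwpos : ∀ v, 0 < wV v)
    (hwV : ∀ e : G.E, G.w e = wV (G.t e) / wV (G.s e))
    (H : Subgroup ℝˣ)
    (act : H → G.V → G.V) (actE : H → G.E → G.E)
    (act_wV : ∀ h v, wV (act h v) = ((h : ℝˣ) : ℝ) * wV v)
    -- the nontrivial adjacency data:
    (x₀ : G.V) (e₁ e₂ : G.E) (h : H) (hne : h ≠ 1)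
    (hs₁ : G.s e₁ = x₀) (hs₂ : G.s e₂ = x₀)
    (ht₂ : G.t e₂ = act h (G.t e₁)) :
    ∀ (Q : FBGraph δ) (πV : G.V → Q.V) (πE : G.E → Q.E),
      Function.Surjective πV → Function.Surjective πE →
      (∀ e, Q.s (πE e) = πV (G.s e)) →
      (∀ e, Q.t (πE e) = πV (G.t e)) →
      (∀ e, Q.w (πE e) = G.w e) →
      (∀ v v', πV v = πV v' ↔ ∃ h' : H, act h' v = v') →
      (∀ e e', πE e = πE e' ↔ ∃ h' : H, actE h' e = e') →
      (∃ E₁ E₂ : Q.E,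
        Q.s E₁ = πV x₀ ∧ Q.s E₂ = πV x₀ ∧ Q.t E₁ = Q.t E₂ ∧
        Q.w E₁ = wV (G.t e₁) / wV x₀ ∧
        Q.w E₂ = ((h : ℝˣ) : ℝ) * wV (G.t e₁) / wV x₀ ∧
        Q.w E₁ ≠ Q.w E₂) ∧
      (∃ l : List Q.E, IsPathOn Q.s Q.t (πV x₀) (πV x₀) l ∧
        pathWeight Q.w l ≠ 1) := by
  intro Q πV πE _ _ hQs hQt hQw hπV _
  have hs₁' : Q.s (πE e₁) = πV x₀ := by rw [hQs, hs₁]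
  have hs₂' : Q.s (πE e₂) = πV x₀ := by rw [hQs, hs₂]
  have ht : Q.t (πE e₁) = Q.t (πE e₂) := by
    rw [hQt, hQt, ht₂]
    exact (hπV _ _).2 ⟨h, rfl⟩
  have hw₁ : Q.w (πE e₁) = wV (G.t e₁) / wV x₀ := by rw [hQw, hwV, hs₁]
  have hw₂ : Q.w (πE e₂) = ((h : ℝˣ) : ℝ) * wV (G.t e₁) / wV x₀ := by
    rw [hQw, hwV, hs₂, ht₂, act_wV]
  have hw : Q.w (πE e₁) ≠ Q.w (πE e₂) := by
    have hh : ((h : ℝˣ) : ℝ) ≠ 1 := fun h1 ↦ hne (Subtype.ext (Units.ext h1))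
    rw [hw₁, hw₂, mul_div_assoc, ne_comm, Ne,
      mul_eq_right₀ (div_pos (hwpos _) (hwpos x₀)).ne']
    exact hh
  refine ⟨⟨πE e₁, πE e₂, hs₁', hs₂', ht, hw₁, hw₂, hw⟩, ?_⟩
  simpa only [hs₁'] using Q.exists_loop_weight_ne_one_of_parallel (hs₁'.trans hs₂'.symm) ht hw

/-- If `H ≤ ℝ₊ˣ` acts nontrivially on a tracial connected fair and balanced
`δ`-graph `Γ` (with `wV (h · v) = h * wV v`) and some vertex `x₀` has two distinct
`H`-translates `y₂ = h · y₁` both adjacent to it, then any quotient graph `Γ^H` is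
not tracial: it has two edges from `[x₀]` to `[y₁]` with the distinct weights
`wV y₁ / wV x₀` and `h * wV y₁ / wV x₀`, and hence a loop based at `[x₀]` of weight
different from `1`. -/
theorem quotient_graph_not_tracial {δ : ℝ} (G : FBGraph δ) (x : G.V)
    (wV : G.V → ℝ) (hwpos : ∀ v, 0 < wV v) (hwx : wV x = 1)
    (hwV : ∀ e : G.E, G.w e = wV (G.t e) / wV (G.s e))
    (hconn : ∀ v : G.V, ∃ l : List G.E, IsPathOn G.s G.t x v l)
    (H : Subgroup ℝˣ) (hHpos : ∀ h : H, (0 : ℝ) < ((h : ℝˣ) : ℝ))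
    (act : H → G.V → G.V) (actE : H → G.E → G.E)
    (act_one : ∀ v, act 1 v = v)
    (act_mul : ∀ h₁ h₂ v, act (h₁ * h₂) v = act h₁ (act h₂ v))
    (actE_one : ∀ e, actE 1 e = e)
    (actE_mul : ∀ h₁ h₂ e, actE (h₁ * h₂) e = actE h₁ (actE h₂ e))
    (act_s : ∀ h e, G.s (actE h e) = act h (G.s e))
    (act_t : ∀ h e, G.t (actE h e) = act h (G.t e))
    (act_w : ∀ h e, G.w (actE h e) = G.w e)
    (act_bar : ∀ h e, G.bar (actE h e) = actE h (G.bar e))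
    (act_wV : ∀ h v, wV (act h v) = ((h : ℝˣ) : ℝ) * wV v)
    -- the nontrivial adjacency data:
    (x₀ : G.V) (e₁ e₂ : G.E) (h : H) (hne : h ≠ 1)
    (hs₁ : G.s e₁ = x₀) (hs₂ : G.s e₂ = x₀)
    (ht₂ : G.t e₂ = act h (G.t e₁)) :
    ∀ (Q : FBGraph δ) (πV : G.V → Q.V) (πE : G.E → Q.E),
      Function.Surjective πV → Function.Surjective πE →
      (∀ e, Q.s (πE e) = πV (G.s e)) →
      (∀ e, Q.t (πE e) = πV (G.t e)) →
      (∀ e, Q.w (πE e) = G.w e) →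
      (∀ v v', πV v = πV v' ↔ ∃ h' : H, act h' v = v') →
      (∀ e e', πE e = πE e' ↔ ∃ h' : H, actE h' e = e') →
      (∃ E₁ E₂ : Q.E,
        Q.s E₁ = πV x₀ ∧ Q.s E₂ = πV x₀ ∧ Q.t E₁ = Q.t E₂ ∧
        Q.w E₁ = wV (G.t e₁) / wV x₀ ∧
        Q.w E₂ = ((h : ℝˣ) : ℝ) * wV (G.t e₁) / wV x₀ ∧
        Q.w E₁ ≠ Q.w E₂) ∧
      (∃ l : List Q.E, IsPathOn Q.s Q.t (πV x₀) (πV x₀) l ∧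
        pathWeight Q.w l ≠ 1) :=
  quotient_graph_not_tracial_general G wV hwpos hwV H act actE act_wV x₀ e₁ e₂ h hne hs₁ hs₂ ht₂
end

section
/- For a tracial connected fair and balanced δ-graph Γ, if λ ∈ T₀(Γ) — that is, λ is a loop weight of some fair and balanced δ-graph Λ with Λ_tr ≅ Γ — then λ ∈ W^×(Γ): there is a weight-preserving automorphism α of Γ with w_V(α(*)) = λ. Explicitly, for a loop ℓ of weight λ in Λ, the map [p] ↦ [p * ℓ] on vertices of Λ_tr (precomposition by ℓ) is such an automorphism. -/
theorem IsPathOn.reverse_bar {δ : ℝ} (G : FBGraph δ) {a b : G.V} {l : List G.E}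
    (h : IsPathOn G.s G.t a b l) :
    IsPathOn G.s G.t b a (l.reverse.map G.bar) := by
  induction h with
  | nil v => exact IsPathOn.nil v
  | @cons a c e l hs _ ih =>
    have h1 : IsPathOn G.s G.t (G.t e) a [G.bar e] := by
      have := IsPathOn.single (s := G.s) (t := G.t) (G.bar e)
      rwa [G.s_bar, G.t_bar, hs] at this
    simpa using ih.append h1

theorem pathWeight_reverse_bar {δ : ℝ} (G : FBGraph δ) (l : List G.E) :
    pathWeight G.w l * pathWeight G.w (l.reverse.map G.bar) = 1 := by
  induction l with
  | nil => simp [pathWeight]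
  | cons e l ih =>
    have hb := G.w_bar e
    simp only [pathWeight, List.map_cons, List.prod_cons, List.reverse_cons,
      List.map_append, List.prod_append] at *
    simp [pathWeight] at ih ⊢
    nlinarith [ih, hb]

theorem inv_mem_loopWeights {δ : ℝ} {G : FBGraph δ} {x : G.V} {lam : ℝ}
    (h : lam ∈ loopWeights G x) : lam⁻¹ ∈ loopWeights G x := by
  obtain ⟨l, hl, hw⟩ := h
  refine ⟨l.reverse.map G.bar, hl.reverse_bar, ?_⟩
  have := pathWeight_reverse_bar G l
  rw [hw] at this
  exact (inv_eq_of_mul_eq_one_right this).symm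

theorem loopWeights_ne_zero {δ : ℝ} {G : FBGraph δ} {x : G.V} {lam : ℝ}
    (h : lam ∈ loopWeights G x) : lam ≠ 0 := by
  obtain ⟨l, hl, hw⟩ := h
  have := pathWeight_reverse_bar G l
  rw [hw] at this
  intro h0
  rw [h0] at this
  simp at this

theorem path_exists_mul {δ : ℝ} {G : FBGraph δ} {x : G.V} {lam μ : ℝ} {v : G.V}
    (hlam : lam ∈ loopWeights G x)
    (h : ∃ l, IsPathOn G.s G.t x v l ∧ pathWeight G.w l = μ) :
    ∃ l, IsPathOn G.s G.t x v l ∧ pathWeight G.w l = lam * μ := by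
  obtain ⟨ℓ, hℓ, hℓw⟩ := hlam
  obtain ⟨l, hl, hw⟩ := h
  exact ⟨ℓ ++ l, hℓ.append hl, by rw [pathWeight_append, hℓw, hw]⟩

/-- If `λ` is the weight of a loop based at `*` in a fair and balanced `δ`-graph
`Λ`, then `λ ∈ W^×(Λ_tr)`: precomposition by the loop, `[μ, v] ↦ [λμ, v]`, is a
weight-preserving automorphism `α` of the tracial cover `Λ_tr` with vertex
weighting `ν [μ, v] = μ` satisfying `ν (α [1, *]) = λ`. -/
theorem T0_subset_Wx {δ : ℝ} (G : FBGraph δ) (x : G.V) (lam : ℝ)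
    (hlam : lam ∈ loopWeights G x) :
    ∃ (αV : TrV G x → TrV G x) (αE : TrE G x → TrE G x),
      Function.Bijective αV ∧ Function.Bijective αE ∧
      (∀ e, trS G x (αE e) = αV (trS G x e)) ∧
      (∀ e, trT G x (αE e) = αV (trT G x e)) ∧
      (∀ e, trW G x (αE e) = trW G x e) ∧
      (∀ p : TrV G x, (αV p).val = (lam * p.val.1, p.val.2)) ∧
      (αV (trBase G x)).val.1 = lam := by
  have hne := loopWeights_ne_zero hlam
  have hinv := inv_mem_loopWeights hlam
  refine ⟨fun p => ⟨(lam * p.val.1, p.val.2), path_exists_mul hlam p.prop⟩,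
    fun e => ⟨((lam * e.val.1.1, e.val.1.2), e.val.2),
      ⟨path_exists_mul hlam e.prop.1, e.prop.2⟩⟩, ?_, ?_, ?_, ?_, ?_, ?_, ?_⟩
  · refine Function.bijective_iff_has_inverse.2
      ⟨fun p => ⟨(lam⁻¹ * p.val.1, p.val.2), path_exists_mul hinv p.prop⟩, ?_, ?_⟩
    · intro p; apply Subtype.ext
      simp [← mul_assoc, inv_mul_cancel₀ hne]
    · intro p; apply Subtype.ext
      simp [← mul_assoc, mul_inv_cancel₀ hne]
  · refine Function.bijective_iff_has_inverse.2
      ⟨fun e => ⟨((lam⁻¹ * e.val.1.1, e.val.1.2), e.val.2),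
        ⟨path_exists_mul hinv e.prop.1, e.prop.2⟩⟩, ?_, ?_⟩
    · intro e; apply Subtype.ext
      simp [← mul_assoc, inv_mul_cancel₀ hne]
    · intro e; apply Subtype.ext
      simp [← mul_assoc, mul_inv_cancel₀ hne]
  · intro e; rfl
  · intro e; apply Subtype.ext; simp [trT, mul_assoc]
  · intro e; rfl
  · intro p; rfl
  · simp [trBase]
end
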